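/- For the Lax pair (L, B) of the KM system (L the symmetric matrix with diagonal entries u_1, u_1+u_2, u_2+u_3, …, u_{2n-2}+u_{2n-1}, u_{2n-1} and entries √(u_i u_{i+1}) in positions (i, i+2) and (i+2, i); B the skew-symmetric matrix with entries (1/2)√(u_i u_{i+1}) in position (i, i+2) and -(1/2)√(u_i u_{i+1}) in position (i+2, i)), if u_i(t) > 0 solve u̇_i = u_i(u_{i+1} - u_{i-1}) with u_0 = u_{2n} = 0, then dL/dt = BL - LB. -/

import Mathlib

/-- The Lax matrix `L` of the KM system: diagonal entries `u_{a-1} + u_a`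
(1-based index `a`, so with `u₀ = u_{2n} = 0` the diagonal is
`u₁, u₁+u₂, …, u_{2n-2}+u_{2n-1}, u_{2n-1}`), and entries `√(uₐ u_{a+1})`
in positions `(a, a+2)` and `(a+2, a)`. -/
noncomputable def kmLaxL (n : ℕ) (u : ℕ → ℝ) : Matrix (Fin (2 * n)) (Fin (2 * n)) ℝ :=
  Matrix.of fun i j =>
    if i = j then u i.1 + u (i.1 + 1)
    else if j.1 = i.1 + 2 then Real.sqrt (u (i.1 + 1) * u (i.1 + 2))
    else if i.1 = j.1 + 2 then Real.sqrt (u (j.1 + 1) * u (j.1 + 2))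
    else 0

/-- The skew-symmetric matrix `B` of the Lax pair: entries `(1/2)√(uₐ u_{a+1})`
in position `(a, a+2)` and `-(1/2)√(uₐ u_{a+1})` in position `(a+2, a)`. -/
noncomputable def kmLaxB (n : ℕ) (u : ℕ → ℝ) : Matrix (Fin (2 * n)) (Fin (2 * n)) ℝ :=
  Matrix.of fun i j =>
    if j.1 = i.1 + 2 then (1 / 2) * Real.sqrt (u (i.1 + 1) * u (i.1 + 2))
    else if i.1 = j.1 + 2 then -((1 / 2) * Real.sqrt (u (j.1 + 1) * u (j.1 + 2)))
    else 0

/-!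
`L = X²`, where `X` is the symmetric tridiagonal matrix with off-diagonal entries `√u_a` (the Lax
matrix of the Volterra lattice, which is what the KM system is). Along the flow
`d√u_a/dt = √u_a (u_{a+1} - u_{a-1}) / 2`, and this is exactly `dX/dt = BX - XB`. Hence
`dL/dt = (BX - XB) X + X (BX - XB) = BX² - X²B`.
-/

open Matrix

noncomputable section

def tridiagEntry (w : ℕ → ℝ) (a b : ℕ) : ℝ :=
  if b = a + 1 then w b else if a = b + 1 then w a else 0

def symmTridiag (m : ℕ) (w : ℕ → ℝ) : Matrix (Fin m) (Fin m) ℝ :=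
  of fun i j => tridiagEntry w i j

lemma tridiagEntry_comm (w : ℕ → ℝ) (a b : ℕ) : tridiagEntry w a b = tridiagEntry w b a := by
  unfold tridiagEntry
  split_ifs <;> first | rfl | omega

lemma tridiagEntry_pred_self {w : ℕ → ℝ} (hw0 : w 0 = 0) (b : ℕ) :
    tridiagEntry w (b - 1) b = w b := by
  rcases Nat.eq_zero_or_pos b with rfl | hb
  · simp [tridiagEntry, hw0]
  · rw [tridiagEntry, if_pos (by omega)]

lemma tridiagEntry_succ_self (w : ℕ → ℝ) (b : ℕ) : tridiagEntry w (b + 1) b = w (b + 1) := by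
  rw [tridiagEntry, if_neg (by omega), if_pos rfl]

/-- The boundary values `w 0 = w m = 0` absorb the terms with `k = j - 1 < 0` (read as `0` in `ℕ`)
and `k = j + 1 = m`, which lie outside `Fin m`. -/
lemma sum_mul_tridiagEntry {m : ℕ} {w : ℕ → ℝ} (hw0 : w 0 = 0) (hwm : w m = 0) (F : ℕ → ℝ)
    (j : Fin m) :
    ∑ k : Fin m, F k * tridiagEntry w k j = F (j - 1) * w j + F (j + 1) * w (j + 1) := by
  rw [Fin.sum_univ_eq_sum_range (fun k => F k * tridiagEntry w k j),
    Finset.sum_eq_add (j.1 - 1) (j.1 + 1) (by omega), tridiagEntry_pred_self hw0,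
    tridiagEntry_succ_self]
  · intro k _ hk
    rw [tridiagEntry, if_neg (by omega), if_neg (by omega), mul_zero]
  · intro h
    exact absurd (Finset.mem_range.2 (by omega)) h
  · intro h
    have : j.1 + 1 = m := by simp only [Finset.mem_range] at h; omega
    rw [tridiagEntry_succ_self, this, hwm, mul_zero]

lemma sum_tridiagEntry_mul {m : ℕ} {w : ℕ → ℝ} (hw0 : w 0 = 0) (hwm : w m = 0) (F : ℕ → ℝ)
    (i : Fin m) :
    ∑ k : Fin m, tridiagEntry w i k * F k = w i * F (i - 1) + w (i + 1) * F (i + 1) := by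
  simp only [tridiagEntry_comm w i, mul_comm _ (F _), sum_mul_tridiagEntry hw0 hwm]

lemma hasDerivAt_symmTridiag_apply {m : ℕ} {w : ℝ → ℕ → ℝ} {w' : ℕ → ℝ} {t : ℝ}
    (hw : ∀ a, 0 < a → a < m → HasDerivAt (fun s => w s a) (w' a) t) (i j : Fin m) :
    HasDerivAt (fun s => symmTridiag m (w s) i j) (symmTridiag m w' i j) t := by
  simp only [symmTridiag, of_apply, tridiagEntry]
  split_ifs
  · exact hw j (by omega) j.2
  · exact hw i (by omega) i.2
  · exact hasDerivAt_const t 0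

lemma hasDerivAt_matrix_mul_apply {𝕜 l m p : Type*} [NontriviallyNormedField 𝕜] [Fintype m]
    {A : 𝕜 → Matrix l m 𝕜} {C : 𝕜 → Matrix m p 𝕜} {A' : Matrix l m 𝕜} {C' : Matrix m p 𝕜}
    {t : 𝕜} (hA : ∀ i k, HasDerivAt (fun s => A s i k) (A' i k) t)
    (hC : ∀ k j, HasDerivAt (fun s => C s k j) (C' k j) t) (i : l) (j : p) :
    HasDerivAt (fun s => (A s * C s) i j) ((A' * C t + A t * C') i j) t := by
  simp only [mul_apply, Matrix.add_apply, ← Finset.sum_add_distrib]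
  exact HasDerivAt.fun_sum fun k _ => (hA i k).mul (hC k j)

lemma HasDerivAt.sqrt_of_self_mul {f : ℝ → ℝ} {c x : ℝ} (hf : HasDerivAt f (f x * c) x)
    (hx : 0 < f x) : HasDerivAt (fun y => √(f y)) (√(f x) * c / 2) x := by
  convert hf.sqrt hx.ne' using 1
  have hr : 0 < √(f x) := Real.sqrt_pos.2 hx
  field_simp
  rw [Real.sq_sqrt hx.le, mul_comm]

def kmLaxX (n : ℕ) (v : ℕ → ℝ) : Matrix (Fin (2 * n)) (Fin (2 * n)) ℝ :=
  symmTridiag (2 * n) fun a => √(v a)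

def kmLaxBEntry (v : ℕ → ℝ) (a b : ℕ) : ℝ :=
  if b = a + 2 then (1 / 2) * √(v (a + 1) * v (a + 2))
  else if a = b + 2 then -((1 / 2) * √(v (b + 1) * v (b + 2)))
  else 0

lemma kmLaxB_apply (n : ℕ) (v : ℕ → ℝ) (i j : Fin (2 * n)) :
    kmLaxB n v i j = kmLaxBEntry v i j := rfl

lemma kmLaxL_eq_kmLaxX_mul_self {n : ℕ} {v : ℕ → ℝ} (hv0 : v 0 = 0) (hvn : v (2 * n) = 0)
    (hv : ∀ a ≤ 2 * n, 0 ≤ v a) : kmLaxL n v = kmLaxX n v * kmLaxX n v := by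
  have hsq (a) (ha : a ≤ 2 * n) : √(v a) ^ 2 = v a := Real.sq_sqrt (hv a ha)
  have hmul (a) (ha : a ≤ 2 * n) (b) : √(v a * v b) = √(v a) * √(v b) :=
    Real.sqrt_mul (hv a ha) _
  ext i j
  rw [mul_apply]
  simp only [kmLaxX, symmTridiag, of_apply]
  rw [sum_tridiagEntry_mul (by simp [hv0]) (by simp [hvn]) (tridiagEntry _ · j)]
  obtain ⟨i, hi⟩ := i
  obtain ⟨j, hj⟩ := j
  simp only [kmLaxL, of_apply, tridiagEntry, Fin.mk.injEq]
  rcases (by omega : i = j ∨ j = i + 2 ∨ i = j + 2 ∨ (i ≠ j ∧ j ≠ i + 2 ∧ i ≠ j + 2))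
    with rfl | rfl | rfl | far
  all_goals (try rcases i with _ | i) <;> (try rcases j with _ | j) <;> try omega
  all_goals
    simp (disch := omega) only [if_neg, if_true, Nat.add_sub_cancel, Nat.reduceSubDiff,
      Nat.zero_sub, hv0, Real.sqrt_zero, mul_zero, zero_mul, add_zero, zero_add, hmul] <;>
    ring_nf <;> (try simp (disch := omega) only [hsq])

lemma kmLaxB_mul_kmLaxX_sub_kmLaxX_mul_kmLaxB {n : ℕ} {v : ℕ → ℝ} (hv0 : v 0 = 0)
    (hvn : v (2 * n) = 0) (hv : ∀ a ≤ 2 * n, 0 ≤ v a) :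
    kmLaxB n v * kmLaxX n v - kmLaxX n v * kmLaxB n v =
      symmTridiag (2 * n) fun a => √(v a) * (v (a + 1) - v (a - 1)) / 2 := by
  have hsq (a) (ha : a ≤ 2 * n) : √(v a) ^ 2 = v a := Real.sq_sqrt (hv a ha)
  have hmul (a) (ha : a ≤ 2 * n) (b) : √(v a * v b) = √(v a) * √(v b) :=
    Real.sqrt_mul (hv a ha) _
  ext i j
  rw [Matrix.sub_apply, mul_apply, mul_apply]
  simp only [kmLaxX, symmTridiag, of_apply, kmLaxB_apply]
  rw [sum_mul_tridiagEntry (by simp [hv0]) (by simp [hvn]) (kmLaxBEntry v i),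
    sum_tridiagEntry_mul (by simp [hv0]) (by simp [hvn]) (kmLaxBEntry v · j)]
  obtain ⟨i, hi⟩ := i
  obtain ⟨j, hj⟩ := j
  simp only [kmLaxBEntry, tridiagEntry]
  rcases (by omega : j = i + 1 ∨ i = j + 1 ∨ j = i + 3 ∨ i = j + 3 ∨
      (j ≠ i + 1 ∧ i ≠ j + 1 ∧ j ≠ i + 3 ∧ i ≠ j + 3)) with rfl | rfl | rfl | rfl | far
  all_goals (try rcases i with _ | i) <;> (try rcases j with _ | j) <;> try omega
  all_goals
    simp (disch := omega) only [if_neg, if_true, Nat.add_sub_cancel, Nat.reduceSubDiff,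
      Nat.zero_sub, hv0, Real.sqrt_zero, mul_zero, zero_mul, add_zero, zero_add, sub_zero, hmul] <;>
    ring_nf <;> (try simp (disch := omega) only [hsq]) <;> ring

end

theorem km_lax_equation (n : ℕ) (u : ℝ → ℕ → ℝ)
    (hpos : ∀ t : ℝ, ∀ i ∈ Finset.Icc 1 (2 * n - 1), 0 < u t i)
    (hu0 : ∀ t, u t 0 = 0) (hu2n : ∀ t, u t (2 * n) = 0)
    (hode : ∀ t : ℝ, ∀ i ∈ Finset.Icc 1 (2 * n - 1),
      HasDerivAt (fun s => u s i) (u t i * (u t (i + 1) - u t (i - 1))) t) :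
    ∀ (t : ℝ) (i j : Fin (2 * n)),
      HasDerivAt (fun s => kmLaxL n (u s) i j)
        ((kmLaxB n (u t) * kmLaxL n (u t) - kmLaxL n (u t) * kmLaxB n (u t)) i j) t := by
  have hnonneg (s : ℝ) (a : ℕ) (ha : a ≤ 2 * n) : 0 ≤ u s a := by
    rcases (by omega : a = 0 ∨ a = 2 * n ∨ 1 ≤ a ∧ a ≤ 2 * n - 1) with rfl | rfl | ha
    exacts [(hu0 s).ge, (hu2n s).ge, (hpos s a (Finset.mem_Icc.2 ha)).le]
  have hL (s : ℝ) : kmLaxL n (u s) = kmLaxX n (u s) * kmLaxX n (u s) :=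
    kmLaxL_eq_kmLaxX_mul_self (hu0 s) (hu2n s) (hnonneg s)
  intro t i j
  have hX : ∀ i j, HasDerivAt (fun s => kmLaxX n (u s) i j)
      ((kmLaxB n (u t) * kmLaxX n (u t) - kmLaxX n (u t) * kmLaxB n (u t)) i j) t := by
    rw [kmLaxB_mul_kmLaxX_sub_kmLaxX_mul_kmLaxB (hu0 t) (hu2n t) (hnonneg t)]
    refine hasDerivAt_symmTridiag_apply fun a ha0 ha => ?_
    have ha' : a ∈ Finset.Icc 1 (2 * n - 1) := Finset.mem_Icc.2 ⟨ha0, by omega⟩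
    exact (hode t a ha').sqrt_of_self_mul (hpos t a ha')
  simp only [hL]
  refine (hasDerivAt_matrix_mul_apply hX hX i j).congr_deriv ?_
  exact congrFun (congrFun (by noncomm_ring) i) j
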